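/- If G is a chordal graph that is not a complete graph, then b(G) ≤ Δ(G). -/
import Mathlib


open SimpleGraph

section Defs
variable {V : Type*}

/-- `S` is a dominating set of `G`. -/
def Dominates (G : SimpleGraph V) (S : Set V) : Prop :=
  ∀ v : V, v ∈ S ∨ ∃ u ∈ S, G.Adj u v

/-- The domination number `γ(G)`. -/
noncomputable def domNum (G : SimpleGraph V) [Fintype V] : ℕ :=
  sInf {n | ∃ S : Finset V, S.card = n ∧ Dominates G ↑S}

/-- The bondage number `b(G)`. -/
noncomputable def bondageNum (G : SimpleGraph V) [Fintype V] : ℕ :=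
  sInf {n | ∃ A : Finset (Sym2 V), ↑A ⊆ G.edgeSet ∧ A.card = n ∧
    domNum (G.deleteEdges ↑A) = domNum G + 1}

/-- The clique number `ω(G)`. -/
noncomputable def cliqueNum' (G : SimpleGraph V) [Fintype V] : ℕ :=
  sSup {n | ∃ s : Finset V, G.IsNClique n s}

/-- The degree of a vertex. -/
noncomputable def vdeg (G : SimpleGraph V) (v : V) : ℕ := (G.neighborSet v).ncard

/-- The maximum degree `Δ(G)`. -/
noncomputable def maxDeg (G : SimpleGraph V) [Fintype V] : ℕ :=
  sSup {d | ∃ v, vdeg G v = d}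

/-- A chordal graph: no induced cycle of length at least 4. -/
def Chordal (G : SimpleGraph V) : Prop :=
  ∀ n, 4 ≤ n → IsEmpty (cycleGraph n ↪g G)

/-- The corona `G ∘ K₁`: attach a pendant vertex to each vertex of `G`. -/
def coronaK1 (G : SimpleGraph V) : SimpleGraph (V ⊕ V) :=
  SimpleGraph.fromRel (fun a b =>
    (∃ u v, a = Sum.inl u ∧ b = Sum.inl v ∧ G.Adj u v) ∨
    (∃ u, a = Sum.inl u ∧ b = Sum.inr u))

end Defs


set_option linter.unusedSectionVars false
set_option linter.unusedVariables false
set_option linter.unreachableTactic false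
set_option linter.unusedTactic false
set_option maxHeartbeats 1000000

section Lemmas
variable {V : Type*} [Fintype V]

lemma dominates_univ (G : SimpleGraph V) : Dominates G ↑(Finset.univ : Finset V) := by
  intro v; left; simp

lemma domNum_le (G : SimpleGraph V) {S : Finset V} (h : Dominates G ↑S) :
    domNum G ≤ S.card := Nat.sInf_le ⟨S, rfl, h⟩

lemma domNum_exists (G : SimpleGraph V) :
    ∃ S : Finset V, S.card = domNum G ∧ Dominates G ↑S := by
  have h : {n | ∃ S : Finset V, S.card = n ∧ Dominates G ↑S}.Nonempty :=
    ⟨(Finset.univ : Finset V).card, Finset.univ, rfl, dominates_univ G⟩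
  exact Nat.sInf_mem h

lemma dominates_mono {G H : SimpleGraph V} (hle : ∀ a b, H.Adj a b → G.Adj a b)
    {S : Set V} (h : Dominates H S) : Dominates G S := by
  intro v; rcases h v with h | ⟨u, hu, hadj⟩
  · exact Or.inl h
  · exact Or.inr ⟨u, hu, hle _ _ hadj⟩

lemma domNum_le_deleteEdges (G : SimpleGraph V) (s : Set (Sym2 V)) :
    domNum G ≤ domNum (G.deleteEdges s) := by
  obtain ⟨S, hc, hd⟩ := domNum_exists (G.deleteEdges s)
  calc domNum G ≤ S.card := domNum_le G (dominates_mono (fun a b h => (deleteEdges_adj.mp h).1) hd)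
  _ = _ := hc

/-- Deleting one more edge increases the domination number by at most one. -/
lemma domNum_insert_le (G : SimpleGraph V) (e : Sym2 V) (s : Set (Sym2 V)) :
    domNum (G.deleteEdges (insert e s)) ≤ domNum (G.deleteEdges s) + 1 := by
  set G' := G.deleteEdges s with hG'
  have hdel : G.deleteEdges (insert e s) = G'.deleteEdges {e} := by
    rw [hG', deleteEdges_deleteEdges]
    congr 1
    ext x; simp [or_comm]
  rw [hdel]
  classical
  obtain ⟨D, hc, hd⟩ := domNum_exists G'
  by_cases hD : Dominates (G'.deleteEdges {e}) ↑D
  · have := domNum_le _ hD; omega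
  · simp only [Dominates, not_forall] at hD
    obtain ⟨z, hz⟩ := hD
    push_neg at hz
    obtain ⟨hzD, hz2⟩ := hz
    have hzD' : z ∉ D := by simpa using hzD
    -- z is dominated in G' via edge e
    obtain ⟨x, hxD, hxadj⟩ : ∃ x ∈ D, G'.Adj x z := by
      rcases hd z with h | h
      · exact absurd (by simpa using h) hzD'
      · exact h
    have hxe : s(x, z) = e := by
      by_contra hne
      exact hz2 x (by simpa using hxD) (deleteEdges_adj.mpr ⟨hxadj, by simpa using hne⟩)
    have hdom : Dominates (G'.deleteEdges {e}) ↑(insert z D) := by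
      intro y
      by_cases hy : y ∈ insert z D
      · exact Or.inl (by simpa using hy)
      · have hyz : y ≠ z := fun h => hy (h ▸ Finset.mem_insert_self z D)
        have hyD : y ∉ D := fun h => hy (Finset.mem_insert_of_mem h)
        rcases hd y with h | ⟨x', hx'D, hx'adj⟩
        · exact absurd (by simpa using h) hyD
        · right
          refine ⟨x', by simp [hx'D], ?_⟩
          refine deleteEdges_adj.mpr ⟨hx'adj, ?_⟩
          simp only [Set.mem_singleton_iff]
          intro heq
          rw [← hxe] at heq
          rw [Sym2.eq_iff] at heq
          rcases heq with ⟨h1, h2⟩ | ⟨h1, h2⟩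
          · exact hyz h2
          · rw [h1] at hx'D
            exact hzD' hx'D
    have := domNum_le _ hdom
    have hcard : (insert z D).card ≤ D.card + 1 := Finset.card_insert_le _ _
    omega

/-- If deleting `A` pushes the domination number past `γ+1`, some subset hits exactly `γ+1`. -/
lemma exists_subset_domNum_succ (G : SimpleGraph V) :
    ∀ (A : Finset (Sym2 V)), domNum G + 1 ≤ domNum (G.deleteEdges ↑A) →
      ∃ B ⊆ A, domNum (G.deleteEdges ↑B) = domNum G + 1 := by
  classical
  intro A
  induction A using Finset.strongInduction with
  | _ A ih =>
    intro hA
    by_cases heq : domNum (G.deleteEdges ↑A) = domNum G + 1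
    · exact ⟨A, Finset.Subset.refl A, heq⟩
    · have hAne : A.Nonempty := by
        rcases Finset.eq_empty_or_nonempty A with h | h
        · exfalso; rw [h] at hA; simp at hA
        · exact h
      obtain ⟨a, ha⟩ := hAne
      have hstep : domNum (G.deleteEdges ↑A) ≤ domNum (G.deleteEdges ↑(A.erase a)) + 1 := by
        have : (A : Set (Sym2 V)) = insert a ↑(A.erase a) := by
          rw [← Finset.coe_insert, Finset.insert_erase ha]
        rw [this]
        exact domNum_insert_le G a _
      have hrec : domNum G + 1 ≤ domNum (G.deleteEdges ↑(A.erase a)) := by omega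
      obtain ⟨B, hB, hBeq⟩ := ih (A.erase a) (Finset.erase_ssubset ha) hrec
      exact ⟨B, hB.trans (Finset.erase_subset a A), hBeq⟩

/-- Key construction: given adjacent `v, u` with `N(v) ⊆ N[u]`, there is an edge set of size
at most `deg u` whose deletion increases the domination number. -/
lemma key_construction (G : SimpleGraph V) (u v : V) (huv : G.Adj v u)
    (hnb : ∀ w, G.Adj v w → w = u ∨ G.Adj u w) :
    ∃ A : Finset (Sym2 V), ↑A ⊆ G.edgeSet ∧ A.card ≤ (G.neighborSet u).ncard ∧
      domNum G + 1 ≤ domNum (G.deleteEdges ↑A) := by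
  classical
  set Nv := G.neighborFinset v with hNv
  set Nu := G.neighborFinset u with hNu
  set Fv : Finset (Sym2 V) := Nv.image (fun w => s(v, w)) with hFv
  set Fu : Finset (Sym2 V) := (Nu \ insert v Nv).image (fun w => s(u, w)) with hFu
  set A := Fv ∪ Fu with hA
  have hvne : v ≠ u := G.ne_of_adj huv
  -- membership characterizations
  have hmemFv : ∀ e, e ∈ Fv ↔ ∃ w, G.Adj v w ∧ e = s(v, w) := by
    intro e; simp only [hFv, hNv, Finset.mem_image, mem_neighborFinset]
    constructor
    · rintro ⟨w, h1, h2⟩; exact ⟨w, h1, h2.symm⟩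
    · rintro ⟨w, h1, h2⟩; exact ⟨w, h1, h2.symm⟩
  have hmemFu : ∀ e, e ∈ Fu ↔ ∃ w, G.Adj u w ∧ w ≠ v ∧ ¬ G.Adj v w ∧ e = s(u, w) := by
    intro e
    simp only [hFu, hNu, hNv, Finset.mem_image, Finset.mem_sdiff, mem_neighborFinset,
      Finset.mem_insert]
    constructor
    · rintro ⟨w, ⟨h1, h2⟩, h3⟩
      push_neg at h2
      exact ⟨w, h1, h2.1, h2.2, h3.symm⟩
    · rintro ⟨w, h1, h2, h3, h4⟩
      exact ⟨w, ⟨h1, by push_neg; exact ⟨h2, h3⟩⟩, h4.symm⟩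
  -- A consists of genuine edges
  have hsub : ↑A ⊆ G.edgeSet := by
    intro e he
    simp only [hA, Finset.coe_union, Set.mem_union, Finset.mem_coe] at he
    rcases he with he | he
    · obtain ⟨w, h1, h2⟩ := (hmemFv e).mp he
      rw [h2, mem_edgeSet]; exact h1
    · obtain ⟨w, h1, _, _, h2⟩ := (hmemFu e).mp he
      rw [h2, mem_edgeSet]; exact h1
  -- cardinality bound
  have hncard : (G.neighborSet u).ncard = Nu.card := by
    rw [hNu, neighborFinset_def, Set.ncard_eq_toFinset_card']
  have hcard : A.card ≤ Nu.card := by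
    have hc1 : Fv.card ≤ Nv.card := Finset.card_image_le
    have hc2 : Fu.card ≤ (Nu \ insert v Nv).card := Finset.card_image_le
    have hpart : (Nu \ insert v Nv).card + (Nu ∩ insert v Nv).card = Nu.card :=
      Finset.card_sdiff_add_card_inter Nu (insert v Nv)
    have hss : (insert v Nv).erase u ⊆ Nu ∩ insert v Nv := by
      intro x hx
      rw [Finset.mem_erase, Finset.mem_insert] at hx
      obtain ⟨hxu, hx2⟩ := hx
      rw [Finset.mem_inter, Finset.mem_insert]
      refine ⟨?_, hx2⟩
      rw [hNu, mem_neighborFinset]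
      rcases hx2 with h | h
      · rw [h]; exact huv.symm
      · rcases hnb x (by rwa [hNv, mem_neighborFinset] at h) with h' | h'
        · exact absurd h' hxu
        · exact h'
    have huvmem : u ∈ insert v Nv := by
      rw [Finset.mem_insert]; right; rw [hNv, mem_neighborFinset]; exact huv
    have hvnmem : v ∉ Nv := by
      rw [hNv, mem_neighborFinset]; exact G.irrefl
    have hce : ((insert v Nv).erase u).card = Nv.card := by
      rw [Finset.card_erase_of_mem huvmem, Finset.card_insert_of_notMem hvnmem]
      omega
    have hge : Nv.card ≤ (Nu ∩ insert v Nv).card := by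
      calc Nv.card = ((insert v Nv).erase u).card := hce.symm
      _ ≤ _ := Finset.card_le_card hss
    have hun := Finset.card_union_le Fv Fu
    have hAc : A.card = (Fv ∪ Fu).card := rfl
    omega
  refine ⟨A, hsub, by omega, ?_⟩
  -- properties of the pruned graph
  set H := G.deleteEdges ↑A with hH
  have hAmem : ∀ e, e ∈ (A : Set (Sym2 V)) ↔ e ∈ Fv ∨ e ∈ Fu := by
    intro e; simp [hA]
  have hviso : ∀ x, ¬ H.Adj v x := by
    intro x hx
    rw [hH, deleteEdges_adj] at hx
    exact hx.2 ((hAmem _).mpr (Or.inl ((hmemFv _).mpr ⟨x, hx.1, rfl⟩)))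
  have huadj : ∀ x, H.Adj u x → G.Adj v x := by
    intro x hx
    rw [hH, deleteEdges_adj] at hx
    obtain ⟨hadj, hne⟩ := hx
    by_contra hvx
    have hxv : x ≠ v := by
      rintro rfl
      exact hne ((hAmem _).mpr (Or.inl ((hmemFv _).mpr ⟨u, huv, Sym2.eq_swap⟩)))
    exact hne ((hAmem _).mpr (Or.inr ((hmemFu _).mpr ⟨x, hadj, hxv, hvx, rfl⟩)))
  -- the domination number increases
  obtain ⟨D, hDcard, hDdom⟩ := domNum_exists H
  have hvD : v ∈ D := by
    rcases hDdom v with h | ⟨x, hx, hadj⟩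
    · exact_mod_cast h
    · exact absurd (hadj.symm) (hviso x)
  have hdomG : Dominates G ↑(D.erase v) := by
    intro z
    by_cases hzv : z = v
    · rw [hzv]
      right
      rcases hDdom u with h | ⟨x, hx, hadj⟩
      · refine ⟨u, ?_, huv.symm⟩
        simp only [Finset.coe_erase, Set.mem_diff, Set.mem_singleton_iff]
        exact ⟨by exact_mod_cast h, fun h' => hvne h'.symm⟩
      · have hgvx : G.Adj v x := huadj x hadj.symm
        refine ⟨x, ?_, hgvx.symm⟩
        simp only [Finset.coe_erase, Set.mem_diff, Set.mem_singleton_iff]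
        exact ⟨by exact_mod_cast hx, fun h' => G.irrefl (h' ▸ hgvx)⟩
    · rcases hDdom z with h | ⟨y, hy, hadj⟩
      · left
        simp only [Finset.coe_erase, Set.mem_diff, Set.mem_singleton_iff]
        exact ⟨by exact_mod_cast h, hzv⟩
      · right
        have hyv : y ≠ v := fun h => hviso z (h ▸ hadj)
        refine ⟨y, ?_, (deleteEdges_adj.mp hadj).1⟩
        simp only [Finset.coe_erase, Set.mem_diff, Set.mem_singleton_iff]
        exact ⟨by exact_mod_cast hy, hyv⟩
  have h1 := domNum_le G hdomG
  have h2 : (D.erase v).card = D.card - 1 := Finset.card_erase_of_mem hvD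
  have h3 : 1 ≤ D.card := Finset.card_pos.mpr ⟨v, hvD⟩
  omega

lemma mod_char {M x y : ℕ} (hM : 2 ≤ M) (hx : x < M) (hy : y < M) :
    ((x + 1) % M = y ↔ (x + 1 = y ∨ (x + 1 = M ∧ y = 0))) := by
  rcases Nat.lt_or_ge (x + 1) M with h | h
  · rw [Nat.mod_eq_of_lt h]; omega
  · have hxM : x + 1 = M := by omega
    rw [hxM, Nat.mod_self]; omega

lemma fin_sub_one_iff {q : ℕ} (x y : Fin (q + 2)) :
    x - y = 1 ↔ (y.val + 1) % (q + 2) = x.val := by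
  rw [sub_eq_iff_eq_add, Fin.ext_iff, Fin.val_add, Fin.val_one, Nat.add_comm 1 (y : ℕ)]
  exact eq_comm

lemma cycleGraph_adj_val {q : ℕ} {a b : Fin (q + 2)} :
    (cycleGraph (q + 2)).Adj a b ↔
      ((a.val + 1) % (q + 2) = b.val ∨ (b.val + 1) % (q + 2) = a.val) := by
  rw [cycleGraph_adj, fin_sub_one_iff, fin_sub_one_iff]
  exact or_comm

/-- The auxiliary map prepending `w` to a path `f`. -/
def extFun {V : Type*} {n : ℕ} (f : Fin n → V) (w : V) (N : ℕ) (hN : N ≤ n + 1) :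
    Fin N → V :=
  fun i => if h : (i : ℕ) = 0 then w else f ⟨(i : ℕ) - 1, by have := i.isLt; omega⟩

lemma extFun_zero {n : ℕ} {f : Fin n → V} {w : V} {N : ℕ} {hN : N ≤ n + 1} {i : Fin N}
    (hi : (i : ℕ) = 0) : extFun f w N hN i = w := dif_pos hi

lemma extFun_pos {n : ℕ} {f : Fin n → V} {w : V} {N : ℕ} {hN : N ≤ n + 1} {i : Fin N}
    (hi : (i : ℕ) ≠ 0) (h : (i : ℕ) - 1 < n) : extFun f w N hN i = f ⟨(i : ℕ) - 1, h⟩ :=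
  dif_neg hi

lemma extFun_inj {n : ℕ} {f : Fin n → V} {w : V} {N : ℕ} {hN : N ≤ n + 1}
    (hinj : Function.Injective f) (hw : w ∉ Set.range f) :
    Function.Injective (extFun f w N hN) := by
  intro i k h
  by_cases hi : (i : ℕ) = 0 <;> by_cases hk : (k : ℕ) = 0
  · exact Fin.ext (by omega)
  · rw [extFun_zero hi, extFun_pos hk (by have := k.isLt; omega)] at h
    exact absurd ⟨_, h.symm⟩ hw
  · rw [extFun_zero hk, extFun_pos hi (by have := i.isLt; omega)] at h
    exact absurd ⟨_, h⟩ hw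
  · rw [extFun_pos hi (by have := i.isLt; omega),
      extFun_pos hk (by have := k.isLt; omega)] at h
    have := Fin.mk.injEq .. ▸ (hinj h)
    have : (i : ℕ) - 1 = (k : ℕ) - 1 := Fin.mk.inj_iff.mp (hinj h)
    exact Fin.ext (by omega)

/-- In a chordal graph with at least one edge there are adjacent `v, u`
with `N(v) ⊆ N[u]` (endpoint of a longest induced path and its neighbor). -/
lemma exists_good_pair (G : SimpleGraph V) (hch : Chordal G)
    (hE : ∃ a b, G.Adj a b) :
    ∃ u v, G.Adj v u ∧ ∀ w, G.Adj v w → w = u ∨ G.Adj u w := by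
  classical
  set P : ℕ → Prop := fun n => ∃ f : Fin n → V, Function.Injective f ∧
      ∀ i j : Fin n, G.Adj (f i) (f j) ↔ ((i : ℕ) + 1 = (j : ℕ) ∨ (j : ℕ) + 1 = (i : ℕ)) with hP
  obtain ⟨a, b, hab⟩ := hE
  have hP2 : P 2 := by
    refine ⟨![a, b], ?_, ?_⟩
    · intro i k h
      fin_cases i <;> fin_cases k <;> simp_all <;> exact absurd h.symm hab.ne
    · intro i k
      fin_cases i <;> fin_cases k <;>
        simp [hab, hab.symm, G.irrefl]
  have hbdd : ∀ m ∈ {n | P n}, m ≤ Fintype.card V := by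
    rintro m ⟨f, hinj, -⟩
    simpa using Fintype.card_le_of_injective f hinj
  set n := sSup {n | P n} with hn
  have hPn : P n := Nat.sSup_mem ⟨2, hP2⟩ ⟨Fintype.card V, hbdd⟩
  have h2n : 2 ≤ n := le_csSup ⟨Fintype.card V, hbdd⟩ hP2
  have hmax : ¬ P (n + 1) := by
    intro h
    have := le_csSup ⟨Fintype.card V, hbdd⟩ h
    omega
  obtain ⟨f, hinj, hadj⟩ := hPn
  set v := f ⟨0, by omega⟩ with hv
  set u := f ⟨1, by omega⟩ with hu
  have hvu : G.Adj v u := by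
    rw [hv, hu, hadj]; simp
  refine ⟨u, v, hvu, ?_⟩
  intro w hw
  by_contra hcon
  push_neg at hcon
  obtain ⟨hwu, hnadj⟩ := hcon
  -- w is not on the path
  have hrange : w ∉ Set.range f := by
    rintro ⟨i, rfl⟩
    rw [G.adj_comm, hadj] at hw
    simp only [Fin.val_mk] at hw
    have hi1 : (i : ℕ) = 1 := by omega
    exact hwu (by rw [hu]; congr 1; exact Fin.ext hi1)
  have hw0 : G.Adj w (f ⟨0, by omega⟩) := hw.symm
  have hnadj1 : ¬ G.Adj w (f ⟨1, by omega⟩) := fun h => hnadj h.symm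
  set T : Finset (Fin n) := Finset.univ.filter (fun i => 2 ≤ (i : ℕ) ∧ G.Adj w (f i)) with hT
  rcases Finset.eq_empty_or_nonempty T with hTe | hTne
  · -- extend the path: contradiction with maximality
    apply hmax
    have hTnone : ∀ i : Fin n, 2 ≤ (i : ℕ) → ¬ G.Adj w (f i) := by
      intro i h2 hadj'
      have : i ∈ T := by rw [hT]; simp [h2, hadj']
      rw [hTe] at this; exact absurd this (Finset.notMem_empty i)
    have hwk : ∀ (k : ℕ) (hk : k < n), (G.Adj w (f ⟨k, hk⟩) ↔ k = 0) := by
      intro k hk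
      constructor
      · intro h
        by_contra h0
        rcases Nat.lt_or_ge k 2 with h2 | h2
        · have hk1 : k = 1 := by omega
          subst hk1; exact hnadj1 h
        · exact hTnone ⟨k, hk⟩ h2 h
      · rintro rfl; exact hw0
    refine ⟨extFun f w (n + 1) le_rfl, extFun_inj hinj hrange, ?_⟩
    intro i k
    by_cases hi : (i : ℕ) = 0 <;> by_cases hk : (k : ℕ) = 0
    · have : i = k := Fin.ext (by omega)
      subst this
      rw [extFun_zero hi]
      constructor
      · intro h; exact absurd h (G.irrefl)
      · intro h; exact absurd h (by omega)
    · rw [extFun_zero hi, extFun_pos hk (by have := k.isLt; omega), hwk]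
      have := k.isLt; omega
    · rw [extFun_zero hk, extFun_pos hi (by have := i.isLt; omega), G.adj_comm, hwk]
      have := i.isLt; omega
    · rw [extFun_pos hi (by have := i.isLt; omega),
        extFun_pos hk (by have := k.isLt; omega), hadj]
      simp only [Fin.val_mk]
      have := i.isLt; have := k.isLt; omega
  · -- a chord-free cycle of length ≥ 4: contradiction with chordality
    set j := T.min' hTne with hj
    have hjT : j ∈ T := T.min'_mem hTne
    rw [hT, Finset.mem_filter] at hjT
    obtain ⟨-, hj2, hjadj⟩ := hjT
    set m := (j : ℕ) with hm
    have hmn : m < n := j.isLt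
    have hmid : ∀ k : Fin n, 1 ≤ (k : ℕ) → (k : ℕ) < m → ¬ G.Adj w (f k) := by
      intro k h1 h2 hadj'
      rcases Nat.lt_or_ge (k : ℕ) 2 with hlt | hge
      · have : (k : ℕ) = 1 := by omega
        exact hnadj1 (by rwa [show k = ⟨1, by omega⟩ from Fin.ext this] at hadj')
      · have hkT : k ∈ T := by rw [hT]; simp [hge, hadj']
        have hle := Fin.le_def.mp (T.min'_le k hkT)
        have hjj : ((T.min' hTne : Fin n) : ℕ) = m := by rw [hm, hj]
        omega
    have hwm : G.Adj w (f ⟨m, hmn⟩) := by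
      rwa [show (⟨m, hmn⟩ : Fin n) = j from Fin.ext rfl]
    -- truth table for adjacency between w and path vertices (indices ≤ m)
    have hwk : ∀ (k : ℕ) (hk : k < n), k ≤ m → (G.Adj w (f ⟨k, hk⟩) ↔ (k = 0 ∨ k = m)) := by
      intro k hk hkm
      constructor
      · intro h
        by_contra h0
        push_neg at h0
        have hv : ((⟨k, hk⟩ : Fin n) : ℕ) = k := rfl
        exact hmid ⟨k, hk⟩ (by omega) (by omega) h
      · rintro (rfl | rfl)
        · exact hw0
        · exact hwm
    -- build the cycle embedding
    have hMle : m + 2 ≤ n + 1 := by omega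
    have hM2 : 2 ≤ m + 2 := by omega
    set g := extFun f w (m + 2) hMle with hg
    have hbound : ∀ i : Fin (m + 2), (i : ℕ) ≠ 0 → (i : ℕ) - 1 < n := by
      intro i hi; have := i.isLt; omega
    have hcase : ∀ a' b' : Fin (m + 2), (a' : ℕ) = 0 → (b' : ℕ) ≠ 0 →
        (G.Adj (g a') (g b') ↔ (cycleGraph (m + 2)).Adj a' b') := by
      intro a' b' ha hb
      rw [hg, extFun_zero ha, extFun_pos hb (hbound b' hb),
        cycleGraph_adj_val, mod_char hM2 a'.isLt b'.isLt, mod_char hM2 b'.isLt a'.isLt,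
        hwk _ _ (by have := b'.isLt; omega)]
      have := b'.isLt
      omega
    have emb : cycleGraph (m + 2) ↪g G := by
      refine ⟨⟨g, extFun_inj hinj hrange⟩, ?_⟩
      intro a' b'
      simp only [Function.Embedding.coeFn_mk]
      by_cases ha : (a' : ℕ) = 0 <;> by_cases hb : (b' : ℕ) = 0
      · have : a' = b' := Fin.ext (by omega)
        subst this
        simp [G.irrefl]
      · exact hcase a' b' ha hb
      · exact (G.adj_comm _ _).trans ((hcase b' a' hb ha).trans
          ((cycleGraph (m + 2)).adj_comm _ _))
      · rw [hg, extFun_pos ha (hbound a' ha), extFun_pos hb (hbound b' hb), hadj,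
          cycleGraph_adj_val, mod_char hM2 a'.isLt b'.isLt, mod_char hM2 b'.isLt a'.isLt]
        simp only [Fin.val_mk]
        have := a'.isLt; have := b'.isLt
        omega
    exact (hch (m + 2) (by omega)).false emb

end Lemmas

/-- a chordal non-complete graph satisfies `b(G) ≤ Δ(G)`. -/
theorem bondage_chordal_le_maxDeg (V : Type*) [Fintype V] (G : SimpleGraph V)
    (hch : Chordal G) (hnc : G ≠ ⊤) :
    bondageNum G ≤ maxDeg G := by
  classical
  by_cases hE : ∃ a b, G.Adj a b
  · obtain ⟨u, v, hvu, hnb⟩ := exists_good_pair G hch hE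
    obtain ⟨A, hsub, hcard, hinc⟩ := key_construction G u v hvu hnb
    obtain ⟨B, hBA, hBeq⟩ := exists_subset_domNum_succ G A hinc
    have h1 : bondageNum G ≤ B.card := by
      apply Nat.sInf_le
      exact ⟨B, (Finset.coe_subset.mpr hBA).trans hsub, rfl, hBeq⟩
    have h2 : B.card ≤ (G.neighborSet u).ncard := le_trans (Finset.card_le_card hBA) hcard
    have h3 : vdeg G u ≤ maxDeg G := by
      apply le_csSup
      · refine ⟨Fintype.card V, ?_⟩
        rintro d ⟨x, rfl⟩
        calc vdeg G x ≤ (Set.univ : Set V).ncard :=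
              Set.ncard_le_ncard (Set.subset_univ _) Set.finite_univ
        _ = Fintype.card V := by rw [Set.ncard_univ, Nat.card_eq_fintype_card]
      · exact ⟨u, rfl⟩
    have h4 : vdeg G u = (G.neighborSet u).ncard := rfl
    omega
  · have hempty : {n | ∃ A : Finset (Sym2 V), ↑A ⊆ G.edgeSet ∧ A.card = n ∧
        domNum (G.deleteEdges ↑A) = domNum G + 1} = ∅ := by
      ext k
      simp only [Set.mem_empty_iff_false, iff_false, Set.mem_setOf_eq]
      rintro ⟨A, hsub, hcard, hdom⟩
      have hA : A = ∅ := by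
        rcases Finset.eq_empty_or_nonempty A with h | ⟨e, he⟩
        · exact h
        · exfalso
          have hmem : e ∈ G.edgeSet := hsub (Finset.mem_coe.mpr he)
          induction e using Sym2.ind with
          | _ x y => exact hE ⟨x, y, (SimpleGraph.mem_edgeSet G).mp hmem⟩
      rw [hA] at hdom
      simp only [Finset.coe_empty, SimpleGraph.deleteEdges_empty] at hdom
      omega
    rw [bondageNum, hempty, Nat.sInf_empty]
    exact Nat.zero_le _
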